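/- arXiv:2202.10028 — 2 statements merged into one kernel-verified Lean document; each statement's English description precedes it below -/
import Mathlib

section
/- Let y and y* satisfy g(y) ≤ (1+ε)·g(y*), where f(z) = D·i − g(z) for all z, g(y*) ≤ D·i/(1+2ε), and all quantities are nonnegative. Then f(y) ≥ f(y*)/2. -/
/-- If g(y) ≤ (1+ε)g(y*) and g(y*) ≤ D·i/(1+2ε), with f(z) = D·i − g(z),
then f(y) ≥ f(y*)/2. -/
theorem stmt6 (D ε gy gys : ℝ) (i : ℕ) (hi : 1 ≤ i) (hD : 0 ≤ D) (hε : 0 < ε)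
    (hgy0 : 0 ≤ gy) (hgy1 : gy ≤ D * i) (hgys0 : 0 ≤ gys) (hgys1 : gys ≤ D * i)
    (happrox : gy ≤ (1 + ε) * gys) (hbound : gys ≤ D * i / (1 + 2 * ε)) :
    (D * i - gys) / 2 ≤ D * i - gy := by
  have h : (1 + 2*ε) * gys ≤ D * i := by
    rw [le_div_iff₀ (by linarith)] at hbound; linarith
  nlinarith
end

section
/- In the reduction graph H built from G by adding |V| new vertices z_1,…,z_{|V|} with zero-weight edges among themselves and to V, and assigning each original edge e weight Γ + c(e) with Γ ≥ r·⌈|V|/2⌉ + 1 and c(e) ∈ {0,…,r}: G has a matching with x edges and total cost y if and only if H has a perfect matching of total weight x·Γ + y. -/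
open Classical Set Function

set_option linter.unusedSectionVars false

namespace Stmt18Aux


variable {V : Type*} [Fintype V] [DecidableEq V] {G : SimpleGraph V}

noncomputable def partner (M : G.Subgraph) (v : V) : V :=
  if h : ∃ w, M.Adj v w then h.choose else v

lemma partner_adj {M : G.Subgraph} (hM : M.IsMatching) {v : V} (hv : v ∈ M.verts) :
    M.Adj v (partner M v) := by
  obtain ⟨w, hw, -⟩ := hM hv
  rw [partner, dif_pos ⟨w, hw⟩]
  exact (⟨w, hw⟩ : ∃ w, M.Adj v w).choose_spec

lemma partner_eq {M : G.Subgraph} (hM : M.IsMatching) {v w : V} (h : M.Adj v w) :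
    partner M v = w := by
  obtain ⟨w', hw', hu⟩ := hM (M.edge_vert h)
  have h1 := hu _ (partner_adj hM (M.edge_vert h))
  have h2 := hu _ h
  rw [h1]; exact h2.symm

lemma partner_partner {M : G.Subgraph} (hM : M.IsMatching) {v : V} (hv : v ∈ M.verts) :
    partner M (partner M v) = v :=
  partner_eq hM (partner_adj hM hv).symm


set_option linter.unusedSectionVars false

variable {V : Type*} [Fintype V] [DecidableEq V] {G : SimpleGraph V}

lemma sum_eq {H : SimpleGraph (V ⊕ Fin (Fintype.card V))} (Γ : ℕ) (c : Sym2 V → ℕ)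
    (W : Sym2 (V ⊕ Fin (Fintype.card V)) → ℕ)
    (hW1 : ∀ u v : V, W s(Sum.inl u, Sum.inl v) = Γ + c s(u, v))
    (hW2 : ∀ (a : V ⊕ Fin (Fintype.card V)) (i : Fin (Fintype.card V)), W s(a, Sum.inr i) = 0)
    (M : G.Subgraph) (N : H.Subgraph)
    (hMN : ∀ u v, M.Adj u v ↔ N.Adj (Sum.inl u) (Sum.inl v)) :
    ∑ᶠ e ∈ N.edgeSet, W e = M.edgeSet.ncard * Γ + ∑ᶠ e ∈ M.edgeSet, c e := by
  set A : Set (Sym2 (V ⊕ Fin (Fintype.card V))) := Sym2.map Sum.inl '' M.edgeSet with hA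
  have hinj : Function.Injective (Sym2.map (Sum.inl : V → V ⊕ Fin (Fintype.card V))) :=
    Sym2.map.injective Sum.inl_injective
  have hAsub : A ⊆ N.edgeSet := by
    rintro e ⟨e', he', rfl⟩
    induction e' using Sym2.ind with
    | _ u v =>
      rw [Sym2.map_pair_eq, SimpleGraph.Subgraph.mem_edgeSet]
      exact (hMN u v).mp he'
  have hsplit : N.edgeSet = A ∪ (N.edgeSet \ A) := (Set.union_diff_cancel hAsub).symm
  rw [hsplit, finsum_mem_union disjoint_sdiff_right (Set.toFinite _) (Set.toFinite _)]
  have hzero : ∑ᶠ e ∈ N.edgeSet \ A, W e = 0 := by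
    apply finsum_mem_of_eqOn_zero
    rintro e ⟨he, hne⟩
    induction e using Sym2.ind with
    | _ a b =>
      cases a with
      | inr i => rw [Sym2.eq_swap]; exact hW2 _ i
      | inl u =>
        cases b with
        | inr i => exact hW2 _ i
        | inl v =>
          exact absurd ⟨s(u, v), (hMN u v).mpr (SimpleGraph.Subgraph.mem_edgeSet.mp he),
            (Sym2.map_pair_eq _ _ _)⟩ hne
  rw [hzero, add_zero, hA, finsum_mem_image hinj.injOn]
  have hcongr : ∀ e ∈ M.edgeSet, W (Sym2.map Sum.inl e) = Γ + c e := by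
    intro e he
    induction e using Sym2.ind with
    | _ u v => rw [Sym2.map_pair_eq]; exact hW1 u v
  rw [finsum_mem_congr rfl hcongr]
  have hfin : M.edgeSet.Finite := Set.toFinite _
  rw [← Set.Finite.coe_toFinset hfin, finsum_mem_coe_finset, finsum_mem_coe_finset,
    Finset.sum_add_distrib, Finset.sum_const, Set.ncard_coe_finset, smul_eq_mul]

lemma two_mul_ncard_le {M : G.Subgraph} (hM : M.IsMatching) :
    2 * M.edgeSet.ncard ≤ Fintype.card V := by
  classical
  have hedge : ∀ e : M.edgeSet, M.Adj (e : Sym2 V).out.1 (e : Sym2 V).out.2 := by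
    rintro ⟨e, he⟩
    show M.Adj (Quot.out e).1 (Quot.out e).2
    rw [← SimpleGraph.Subgraph.mem_edgeSet, Sym2.mk, Prod.mk.eta, Quot.out_eq]
    exact he
  set φ : M.edgeSet × Bool → V := fun p =>
    if p.2 then (p.1 : Sym2 V).out.1 else (p.1 : Sym2 V).out.2 with hφ
  have htoE : ∀ (e : M.edgeSet) (b : Bool), hM.toEdge ⟨φ (e, b), by
      cases b with
      | true => exact M.edge_vert (hedge e)
      | false => exact M.edge_vert (hedge e).symm⟩ = e := by
    intro e b
    cases b with
    | true =>
      have := hM.toEdge_eq_of_adj (hedge e)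
      simpa [hφ, (e : Sym2 V).out_eq] using this
    | false =>
      have := hM.toEdge_eq_of_adj (hedge e).symm
      have h2 : s((e : Sym2 V).out.2, (e : Sym2 V).out.1) = (e : Sym2 V) := by
        rw [Sym2.eq_swap]; exact (e : Sym2 V).out_eq
      simpa [hφ, h2] using this
  have hφinj : Function.Injective φ := by
    rintro ⟨e, b⟩ ⟨e', b'⟩ heq
    have hv : φ (e, b) = φ (e', b') := heq
    have he : e = e' := by
      have h1 := htoE e b
      have h2 := htoE e' b'
      rw [← h1, ← h2]
      congr 1
      exact Subtype.ext hv
    subst he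
    have hout : (e : Sym2 V).out.1 ≠ (e : Sym2 V).out.2 := (M.adj_sub (hedge e)).ne
    match b, b' with
    | true, true => rfl
    | false, false => rfl
    | true, false =>
      simp only [hφ, if_true, Bool.false_eq_true, if_false] at hv
      exact absurd hv hout
    | false, true =>
      simp only [hφ, if_true, Bool.false_eq_true, if_false] at hv
      exact absurd hv.symm hout
  have := Fintype.card_le_of_injective φ hφinj
  rw [Fintype.card_prod, Fintype.card_bool] at this
  have hn : M.edgeSet.ncard = Fintype.card M.edgeSet := by
    rw [← Nat.card_coe_set_eq, Nat.card_eq_fintype_card]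
  omega


end Stmt18Aux


/-- Correctness of the budgeted-matching reduction: in the graph H obtained from G by
adding |V| new vertices z_1,…,z_{|V|} joined by zero-weight edges among themselves and to
V, with each original edge e given weight Γ + c(e) where Γ ≥ r·⌈|V|/2⌉ + 1, G has a
matching with x edges and total cost y iff H has a perfect matching of total weight
x·Γ + y. -/
theorem stmt18 {V : Type*} [Fintype V] [DecidableEq V] (G : SimpleGraph V)
    (r Γ x y : ℕ) (c : Sym2 V → ℕ) (hc : ∀ e ∈ G.edgeSet, c e ≤ r)
    (hΓ : r * ((Fintype.card V + 1) / 2) + 1 ≤ Γ)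
    (hx : x ≤ Fintype.card V / 2) (hy : y ≤ r * x)
    (H : SimpleGraph (V ⊕ Fin (Fintype.card V)))
    (hH1 : ∀ u v : V, H.Adj (Sum.inl u) (Sum.inl v) ↔ G.Adj u v)
    (hH2 : ∀ (u : V) (i : Fin (Fintype.card V)), H.Adj (Sum.inl u) (Sum.inr i))
    (hH3 : ∀ i j : Fin (Fintype.card V), H.Adj (Sum.inr i) (Sum.inr j) ↔ i ≠ j)
    (W : Sym2 (V ⊕ Fin (Fintype.card V)) → ℕ)
    (hW1 : ∀ u v : V, W s(Sum.inl u, Sum.inl v) = Γ + c s(u, v))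
    (hW2 : ∀ (a : V ⊕ Fin (Fintype.card V)) (i : Fin (Fintype.card V)),
      W s(a, Sum.inr i) = 0) :
    (∃ M : G.Subgraph, M.IsMatching ∧ M.edgeSet.ncard = x ∧
        ∑ᶠ e ∈ M.edgeSet, c e = y) ↔
      (∃ N : H.Subgraph, N.IsPerfectMatching ∧
        ∑ᶠ e ∈ N.edgeSet, W e = x * Γ + y) := by
  classical
  constructor
  · rintro ⟨M, hM, hcard, hcost⟩
    set eqv : V ≃ Fin (Fintype.card V) := Fintype.equivFin V with heqv
    set f : (V ⊕ Fin (Fintype.card V)) → (V ⊕ Fin (Fintype.card V)) := fun a =>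
      match a with
      | Sum.inl v => if v ∈ M.verts then Sum.inl (Stmt18Aux.partner M v) else Sum.inr (eqv v)
      | Sum.inr i => if eqv.symm i ∈ M.verts
          then Sum.inr (eqv (Stmt18Aux.partner M (eqv.symm i)))
          else Sum.inl (eqv.symm i) with hf
    have hPmem : ∀ v ∈ M.verts, Stmt18Aux.partner M v ∈ M.verts :=
      fun v hv => M.edge_vert (Stmt18Aux.partner_adj hM hv).symm
    have hPne : ∀ v ∈ M.verts, Stmt18Aux.partner M v ≠ v :=
      fun v hv => (M.adj_sub (Stmt18Aux.partner_adj hM hv)).ne'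
    have hinv : ∀ a, f (f a) = a := by
      intro a
      cases a with
      | inl v =>
        by_cases hv : v ∈ M.verts
        · simp only [hf, if_pos hv, if_pos (hPmem v hv)]
          rw [Stmt18Aux.partner_partner hM hv]
        · simp only [hf, if_neg hv, Equiv.symm_apply_apply, if_neg hv]
      | inr i =>
        by_cases hv : eqv.symm i ∈ M.verts
        · simp only [hf, if_pos hv, Equiv.symm_apply_apply, if_pos (hPmem _ hv),
            Stmt18Aux.partner_partner hM hv, Equiv.apply_symm_apply]
        · simp only [hf, if_neg hv, if_neg hv, Equiv.apply_symm_apply]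
    have hadj : ∀ a, H.Adj a (f a) := by
      intro a
      cases a with
      | inl v =>
        by_cases hv : v ∈ M.verts
        · simp only [hf, if_pos hv]
          exact (hH1 _ _).mpr (M.adj_sub (Stmt18Aux.partner_adj hM hv))
        · simp only [hf, if_neg hv]; exact hH2 _ _
      | inr i =>
        by_cases hv : eqv.symm i ∈ M.verts
        · simp only [hf, if_pos hv]
          refine (hH3 _ _).mpr ?_
          intro hcontra
          apply hPne _ hv
          have h' := congrArg eqv.symm hcontra
          rw [Equiv.symm_apply_apply] at h'
          exact h'.symm
        · simp only [hf, if_neg hv]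
          exact (hH2 _ _).symm
    refine ⟨{ verts := Set.univ
              Adj := fun a b => b = f a
              adj_sub := by rintro a b rfl; exact hadj a
              edge_vert := fun _ => Set.mem_univ _
              symm := ⟨by rintro a b rfl; exact (hinv a).symm⟩ }, ⟨?_, fun v => Set.mem_univ _⟩, ?_⟩
    · exact fun v _ => ⟨f v, rfl, fun y hy => hy⟩
    · have hMN : ∀ u v, M.Adj u v ↔ (Sum.inl v : V ⊕ Fin (Fintype.card V)) = f (Sum.inl u) := by
        intro u v
        constructor
        · intro h
          have hu : u ∈ M.verts := M.edge_vert h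
          simp only [hf, if_pos hu, Stmt18Aux.partner_eq hM h]
        · intro h'
          by_cases hu : u ∈ M.verts
          · simp only [hf, if_pos hu] at h'
            rw [Sum.inl.injEq] at h'
            rw [h']
            exact Stmt18Aux.partner_adj hM hu
          · simp only [hf, if_neg hu] at h'
            exact absurd h' (by simp)
      rw [Stmt18Aux.sum_eq Γ c W hW1 hW2 M _ hMN, hcard, hcost]
  · rintro ⟨N, ⟨hNm, hNs⟩, hsum⟩
    set M : G.Subgraph :=
      { verts := {v | ∃ w, N.Adj (Sum.inl v) (Sum.inl w)}
        Adj := fun u v => N.Adj (Sum.inl u) (Sum.inl v)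
        adj_sub := fun h => (hH1 _ _).mp (N.adj_sub h)
        edge_vert := fun h => ⟨_, h⟩
        symm := ⟨fun u v h => h.symm⟩ } with hMdef
    have hM : M.IsMatching := by
      rintro v ⟨w, hw⟩
      obtain ⟨b, hb, hu⟩ := hNm (hNs (Sum.inl v))
      refine ⟨w, hw, fun z hz => ?_⟩
      exact Sum.inl_injective ((hu _ hz).trans (hu _ hw).symm)
    have key := Stmt18Aux.sum_eq Γ c W hW1 hW2 M N (fun u v => Iff.rfl)
    rw [hsum] at key
    set k := M.edgeSet.ncard with hk
    set s := ∑ᶠ e ∈ M.edgeSet, c e with hs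
    have hΓpos : 0 < Γ := by omega
    have h2k : 2 * k ≤ Fintype.card V := Stmt18Aux.two_mul_ncard_le hM
    have hsk : s ≤ r * k := by
      have hfin : M.edgeSet.Finite := Set.toFinite _
      have hs2 : s = ∑ e ∈ hfin.toFinset, c e := by
        rw [hs, ← finsum_mem_coe_finset, Set.Finite.coe_toFinset]
      have hk2 : k = hfin.toFinset.card := by
        rw [hk, ← Set.ncard_coe_finset, Set.Finite.coe_toFinset]
      rw [hs2, hk2, mul_comm]
      have := Finset.sum_le_card_nsmul hfin.toFinset c r (fun e he => by
        rw [Set.Finite.mem_toFinset] at he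
        exact hc e (M.edgeSet_subset he))
      simpa using this
    have hb1 : r * k ≤ r * ((Fintype.card V + 1) / 2) :=
      Nat.mul_le_mul_left r (by omega)
    have hb2 : r * x ≤ r * ((Fintype.card V + 1) / 2) :=
      Nat.mul_le_mul_left r (by omega)
    have hsΓ : s < Γ := by omega
    have hyΓ : y < Γ := by omega
    have hxk : x = k := by
      have h1 : (Γ * x + y) / Γ = x := by
        rw [Nat.mul_add_div hΓpos, Nat.div_eq_of_lt hyΓ, add_zero]
      have h2 : (Γ * k + s) / Γ = k := by
        rw [Nat.mul_add_div hΓpos, Nat.div_eq_of_lt hsΓ, add_zero]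
      rw [← h1, ← h2]
      congr 1
      rw [mul_comm Γ x, mul_comm Γ k]
      exact key
    have hsy : s = y := by
      rw [hxk] at key
      omega
    exact ⟨M, hM, hxk.symm, hsy⟩
end
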